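/- For every Hermitian matrix W on ℂ^{k₁}⊗⋯⊗ℂ^{k_m}: |tr W| ≤ sup{|tr[W (X₁⊗⋯⊗X_m)]| : X_j Hermitian matrices on ℂ^{k_j} with operator norm ‖X_j‖ = 1} ≤ ‖W‖_cov ≤ ‖W‖₁. -/

import Mathlib

open scoped ComplexOrder Matrix

namespace LqHV

/-- Entrywise tensor (Kronecker) product of a finite family of square complex matrices,
realized on the pi-type index. -/
def tprod {ι : Type} [Fintype ι] [DecidableEq ι] {κ : ι → Type} [∀ i, Fintype (κ i)]
    (X : ∀ i, Matrix (κ i) (κ i) ℂ) : Matrix (∀ i, κ i) (∀ i, κ i) ℂ :=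
  fun a b => ∏ i, X i (a i) (b i)

/-- Elementary (product) vector `ψ₁ ⊗ ⋯ ⊗ ψ_m` of a family of vectors. -/
def tvec {ι : Type} [Fintype ι] [DecidableEq ι] {κ : ι → Type} (ψ : ∀ i, κ i → ℂ) :
    (∀ i, κ i) → ℂ :=
  fun a => ∏ i, ψ i (a i)

/-- A matrix `Z` on the tensor product space `ℂ^{k₁} ⊗ ⋯ ⊗ ℂ^{k_m}` is tensor positive if
`⟨ψ₁⊗⋯⊗ψ_m, Z (ψ₁⊗⋯⊗ψ_m)⟩ ≥ 0` for all vectors `ψ_j`. -/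
def TensorPos {ι : Type} [Fintype ι] [DecidableEq ι] {κ : ι → Type} [∀ i, Fintype (κ i)]
    (Z : Matrix (∀ i, κ i) (∀ i, κ i) ℂ) : Prop :=
  ∀ ψ : ∀ i, κ i → ℂ, 0 ≤ star (tvec ψ) ⬝ᵥ Z.mulVec (tvec ψ)

/-- `C` is a covering of `Z`: a tensor positive matrix such that `C + Z` and `C - Z` are both
tensor positive. -/
def IsCovering {ι : Type} [Fintype ι] [DecidableEq ι] {κ : ι → Type} [∀ i, Fintype (κ i)]
    (Z C : Matrix (∀ i, κ i) (∀ i, κ i) ℂ) : Prop :=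
  TensorPos C ∧ TensorPos (C + Z) ∧ TensorPos (C - Z)

/-- The covering norm `‖Z‖_cov = inf{tr C : C a covering of Z}`. -/
noncomputable def covNorm {ι : Type} [Fintype ι] [DecidableEq ι] {κ : ι → Type}
    [∀ i, Fintype (κ i)] (Z : Matrix (∀ i, κ i) (∀ i, κ i) ℂ) : ℝ :=
  sInf ((fun C => (Matrix.trace C).re) '' {C | IsCovering Z C})

/-- The absolute value `|W| := √(Wᴴ W)` of a matrix (`= √(W²)` for Hermitian `W`). -/
noncomputable def matAbs {n : Type} [Fintype n] [DecidableEq n]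
    (W : Matrix n n ℂ) : Matrix n n ℂ :=
  (Matrix.posSemidef_conjTranspose_mul_self W).1.eigenvectorUnitary.1 *
    Matrix.diagonal ((↑) ∘ (√·) ∘ (Matrix.posSemidef_conjTranspose_mul_self W).1.eigenvalues) *
    (star (Matrix.posSemidef_conjTranspose_mul_self W).1.eigenvectorUnitary : Matrix n n ℂ)

/-- The trace norm `‖W‖₁ := tr √(Wᴴ W)`. -/
noncomputable def traceNorm {n : Type} [Fintype n] [DecidableEq n]
    (W : Matrix n n ℂ) : ℝ :=
  ((matAbs W).trace).re

end LqHV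

namespace LqHV

/-- The (l²) operator norm of a matrix. -/
noncomputable def opNorm {n : Type} [Fintype n] [DecidableEq n] (X : Matrix n n ℂ) : ℝ :=
  ‖Matrix.toEuclideanCLM (𝕜 := ℂ) X‖

end LqHV

/-!
Diagonalise each `X_j = V_j D_j V_jᴴ`. The columns `u_a` of `V = ⊗ V_j` are product vectors, so
`tr (W (X₁ ⊗ ⋯ ⊗ X_m)) = ∑_a ⟨u_a, W u_a⟩ μ_a` with `|μ_a| ≤ ‖X₁‖ ⋯ ‖X_m‖ ≤ 1`, while
`|⟨u_a, W u_a⟩| ≤ ⟨u_a, C u_a⟩` for every covering `C` of `W` because `C ± W` are tensor positive;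
summing over `a` bounds the trace by `tr C`. The lower bound comes from `X_j = 1`, and `|W|` is a
covering because `|W| ± W = 2 W^±` are positive semidefinite.
-/

namespace LqHV

open Matrix
open scoped MatrixOrder

section Tensor

variable {ι : Type} [Fintype ι] [DecidableEq ι] {κ : ι → Type} [∀ i, Fintype (κ i)]

theorem tprod_mul (X Y : ∀ i, Matrix (κ i) (κ i) ℂ) :
    tprod X * tprod Y = tprod fun i => X i * Y i := by
  ext a b
  simp only [tprod, mul_apply, Finset.prod_univ_sum, Fintype.piFinset_univ,
    Finset.prod_mul_distrib]

theorem star_tprod (X : ∀ i, Matrix (κ i) (κ i) ℂ) :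
    star (tprod X) = tprod fun i => star (X i) := by
  ext a b
  simp [tprod, star_apply]

variable [∀ i, DecidableEq (κ i)]

theorem tprod_diagonal (d : ∀ i, κ i → ℂ) :
    tprod (fun i => diagonal (d i)) = diagonal fun a => ∏ i, d i (a i) := by
  ext a b
  by_cases hab : a = b
  · simp [tprod, hab]
  · obtain ⟨i, hi⟩ := Function.ne_iff.mp hab
    rw [diagonal_apply_ne _ hab]
    exact Finset.prod_eq_zero (Finset.mem_univ i) (diagonal_apply_ne _ hi)

theorem tprod_one : tprod (fun i => (1 : Matrix (κ i) (κ i) ℂ)) = 1 := by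
  simpa [← diagonal_one] using tprod_diagonal (κ := κ) fun _ _ => 1

theorem tprod_mem_unitaryGroup {U : ∀ i, Matrix (κ i) (κ i) ℂ}
    (hU : ∀ i, U i ∈ unitaryGroup (κ i) ℂ) : tprod U ∈ unitaryGroup (∀ i, κ i) ℂ := by
  rw [mem_unitaryGroup_iff, star_tprod, tprod_mul]
  simpa only [fun i => mem_unitaryGroup_iff.mp (hU i)] using tprod_one

end Tensor

theorem star_mul_mul_apply_self {n : Type} [Fintype n] (Z U : Matrix n n ℂ) (a : n) :
    (star U * Z * U) a a = star (fun b => U b a) ⬝ᵥ Z *ᵥ fun b => U b a := by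
  simp only [mul_apply, mulVec, dotProduct, star_apply, Pi.star_apply, Finset.sum_mul,
    Finset.mul_sum]
  rw [Finset.sum_comm]
  exact Finset.sum_congr rfl fun b _ => Finset.sum_congr rfl fun c _ => by ring

theorem trace_mul_conj_diagonal {n : Type} [Fintype n] [DecidableEq n] (W U : Matrix n n ℂ)
    (μ : n → ℂ) : (W * (U * diagonal μ * star U)).trace = ∑ a, (star U * W * U) a a * μ a := by
  rw [← mul_assoc, ← mul_assoc, trace_mul_comm, ← mul_assoc, ← mul_assoc]
  simp [trace, mul_diagonal]

theorem trace_star_mul_mul_of_mem_unitaryGroup {n : Type} [Fintype n] [DecidableEq n]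
    {U : Matrix n n ℂ} (hU : U ∈ unitaryGroup n ℂ) (C : Matrix n n ℂ) :
    (star U * C * U).trace = C.trace := by
  rw [trace_mul_cycle, mem_unitaryGroup_iff.mp hU, one_mul]

theorem matAbs_eq_abs {n : Type} [Fintype n] [DecidableEq n] (W : Matrix n n ℂ) :
    matAbs W = CFC.abs W := by
  have hWW := posSemidef_conjTranspose_mul_self W
  rw [CFC.abs, star_eq_conjTranspose, CFC.sqrt_eq_real_sqrt _ hWW.nonneg, cfcₙ_eq_cfc,
    hWW.1.cfc_eq]
  -- `matAbs` is literally the spectral formula for `cfc √ (Wᴴ * W)`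
  rfl

theorem abs_eigenvalues_le_opNorm {n : Type} [Fintype n] [DecidableEq n] {X : Matrix n n ℂ}
    (hX : X.IsHermitian) (j : n) : |hX.eigenvalues j| ≤ opNorm X := by
  open scoped Matrix.Norms.L2Operator in
  have : Nonempty n := ⟨j⟩
  rw [opNorm, ← cstar_norm_def, ← Real.norm_eq_abs]
  exact spectrum.norm_le_norm_of_mem (hX.eigenvalues_mem_spectrum_real j)

theorem opNorm_one {n : Type} [Fintype n] [DecidableEq n] [Nonempty n] :
    opNorm (1 : Matrix n n ℂ) = 1 := by
  open scoped Matrix.Norms.L2Operator in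
  rw [opNorm, ← cstar_norm_def, norm_one]

section Covering

variable {ι : Type} [Fintype ι] [DecidableEq ι] {κ : ι → Type} [∀ i, Fintype (κ i)]

theorem star_tprod_mul_mul_tprod_apply_self (Z : Matrix (∀ i, κ i) (∀ i, κ i) ℂ)
    (V : ∀ i, Matrix (κ i) (κ i) ℂ) (a : ∀ i, κ i) :
    (star (tprod V) * Z * tprod V) a a =
      star (tvec fun i b => V i b (a i)) ⬝ᵥ Z *ᵥ tvec fun i b => V i b (a i) :=
  star_mul_mul_apply_self Z (tprod V) a

theorem tensorPos_of_nonneg {Z : Matrix (∀ i, κ i) (∀ i, κ i) ℂ} (hZ : 0 ≤ Z) : TensorPos Z :=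
  fun ψ => (nonneg_iff_posSemidef.mp hZ).dotProduct_mulVec_nonneg (tvec ψ)

theorem TensorPos.trace_re_nonneg [∀ i, DecidableEq (κ i)]
    {C : Matrix (∀ i, κ i) (∀ i, κ i) ℂ} (hC : TensorPos C) : 0 ≤ C.trace.re := by
  -- standard basis vectors are product vectors: the columns of `tprod 1`
  have hdiag (a : ∀ i, κ i) : 0 ≤ C a a := by
    have := hC fun i b => (1 : Matrix (κ i) (κ i) ℂ) b (a i)
    rwa [← star_tprod_mul_mul_tprod_apply_self, tprod_one, star_one, mul_one, one_mul] at this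
  exact (Complex.le_def.mp (Finset.sum_nonneg fun a _ => hdiag a)).1

theorem IsCovering.norm_le {W C : Matrix (∀ i, κ i) (∀ i, κ i) ℂ} (hC : IsCovering W C)
    (ψ : ∀ i, κ i → ℂ) :
    ‖star (tvec ψ) ⬝ᵥ W *ᵥ tvec ψ‖ ≤ (star (tvec ψ) ⬝ᵥ C *ᵥ tvec ψ).re := by
  have hadd := hC.2.1 ψ
  have hsub := hC.2.2 ψ
  rw [add_mulVec, dotProduct_add, Complex.nonneg_iff] at hadd
  rw [sub_mulVec, dotProduct_sub, Complex.nonneg_iff] at hsub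
  simp only [Complex.add_re, Complex.add_im, Complex.sub_re, Complex.sub_im] at hadd hsub
  have him : (star (tvec ψ) ⬝ᵥ W *ᵥ tvec ψ).im = 0 := by linarith [hadd.2, hsub.2]
  rw [← Complex.re_add_im (star (tvec ψ) ⬝ᵥ W *ᵥ tvec ψ), him, Complex.ofReal_zero, zero_mul,
    add_zero, Complex.norm_real, Real.norm_eq_abs, abs_le]
  constructor <;> linarith

theorem isCovering_matAbs [∀ i, DecidableEq (κ i)] {W : Matrix (∀ i, κ i) (∀ i, κ i) ℂ}
    (hW : W.IsHermitian) :
    IsCovering W (matAbs W) := by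
  rw [matAbs_eq_abs]
  refine ⟨tensorPos_of_nonneg (CFC.abs_nonneg W), ?_, ?_⟩
  · rw [CFC.abs_add_self W hW.isSelfAdjoint]
    exact tensorPos_of_nonneg (smul_nonneg zero_le_two (CFC.posPart_nonneg W))
  · rw [CFC.abs_sub_self W hW.isSelfAdjoint]
    exact tensorPos_of_nonneg (smul_nonneg zero_le_two (CFC.negPart_nonneg W))

theorem IsCovering.norm_trace_mul_tprod_le [∀ i, DecidableEq (κ i)]
    {W C : Matrix (∀ i, κ i) (∀ i, κ i) ℂ} (hC : IsCovering W C)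
    {X : ∀ i, Matrix (κ i) (κ i) ℂ} (hX : ∀ i, (X i).IsHermitian)
    (hXn : ∀ i, opNorm (X i) ≤ 1) :
    ‖(W * tprod X).trace‖ ≤ C.trace.re := by
  set V : ∀ i, Matrix (κ i) (κ i) ℂ := fun i => (hX i).eigenvectorUnitary
  set D : ∀ i, κ i → ℂ := fun i => RCLike.ofReal ∘ (hX i).eigenvalues
  have hV : tprod V ∈ unitaryGroup _ ℂ :=
    tprod_mem_unitaryGroup fun i => (hX i).eigenvectorUnitary.2
  have hX_eq : tprod X = tprod V * tprod (fun i => diagonal (D i)) * star (tprod V) := by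
    rw [star_tprod, tprod_mul, tprod_mul]
    exact congrArg tprod (funext fun i => (hX i).spectral_theorem)
  have hD (a : ∀ i, κ i) : ‖∏ i, D i (a i)‖ ≤ 1 := by
    rw [norm_prod]
    refine Finset.prod_le_one (fun i _ => norm_nonneg _) fun i _ => ?_
    simp only [D, Function.comp_apply, RCLike.norm_ofReal]
    exact (abs_eigenvalues_le_opNorm (hX i) (a i)).trans (hXn i)
  rw [hX_eq, tprod_diagonal, trace_mul_conj_diagonal,
    ← trace_star_mul_mul_of_mem_unitaryGroup hV C, trace, Complex.re_sum]
  refine (norm_sum_le _ _).trans (Finset.sum_le_sum fun a _ => ?_)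
  rw [norm_mul, diag_apply, star_tprod_mul_mul_tprod_apply_self W,
    star_tprod_mul_mul_tprod_apply_self C]
  exact (mul_le_of_le_one_right (norm_nonneg _) (hD a)).trans (hC.norm_le _)

end Covering

section CovNorm

variable {ι : Type} [Fintype ι] [DecidableEq ι] {κ : ι → Type} [∀ i, Fintype (κ i)]
  [∀ i, DecidableEq (κ i)]

theorem covNorm_nonneg (W : Matrix (∀ i, κ i) (∀ i, κ i) ℂ) : 0 ≤ covNorm W :=
  Real.sInf_nonneg <| by
    rintro _ ⟨C, hC, rfl⟩
    exact hC.1.trace_re_nonneg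

theorem covNorm_le {W C : Matrix (∀ i, κ i) (∀ i, κ i) ℂ} (hC : IsCovering W C) :
    covNorm W ≤ C.trace.re :=
  csInf_le ⟨0, by rintro _ ⟨C, hC, rfl⟩; exact hC.1.trace_re_nonneg⟩ ⟨C, hC, rfl⟩

theorem le_covNorm {W : Matrix (∀ i, κ i) (∀ i, κ i) ℂ} (hW : W.IsHermitian) {r : ℝ}
    (h : ∀ C, IsCovering W C → r ≤ C.trace.re) : r ≤ covNorm W :=
  le_csInf ⟨_, matAbs W, isCovering_matAbs hW, rfl⟩ <| by
    rintro _ ⟨C, hC, rfl⟩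
    exact h C hC

end CovNorm

end LqHV

open LqHV in
/-- **Lemma 1, property (1).** For every Hermitian matrix `W` on `ℂ^{k₁} ⊗ ⋯ ⊗ ℂ^{k_m}`:
`|tr W| ≤ sup{|tr[W (X₁⊗⋯⊗X_m)]| : X_j Hermitian, ‖X_j‖ = 1} ≤ ‖W‖_cov ≤ ‖W‖₁`. -/
theorem abs_trace_le_sup_le_covNorm_le_traceNorm {m : ℕ} {k : Fin m → ℕ}
    (W : Matrix (∀ i, Fin (k i)) (∀ i, Fin (k i)) ℂ) (hW : W.IsHermitian) :
    ‖W.trace‖ ≤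
        sSup {r : ℝ | ∃ X : ∀ i, Matrix (Fin (k i)) (Fin (k i)) ℂ,
          (∀ i, (X i).IsHermitian) ∧ (∀ i, opNorm (X i) = 1) ∧
          r = ‖(W * tprod X).trace‖} ∧
      sSup {r : ℝ | ∃ X : ∀ i, Matrix (Fin (k i)) (Fin (k i)) ℂ,
          (∀ i, (X i).IsHermitian) ∧ (∀ i, opNorm (X i) = 1) ∧
          r = ‖(W * tprod X).trace‖} ≤ covNorm W ∧
      covNorm W ≤ traceNorm W := by
  set S := {r : ℝ | ∃ X : ∀ i, Matrix (Fin (k i)) (Fin (k i)) ℂ,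
    (∀ i, (X i).IsHermitian) ∧ (∀ i, opNorm (X i) = 1) ∧ r = ‖(W * tprod X).trace‖}
  have hS : ∀ r ∈ S, r ≤ covNorm W := by
    rintro _ ⟨X, hX, hXn, rfl⟩
    exact le_covNorm hW fun C hC => hC.norm_trace_mul_tprod_le hX fun i => (hXn i).le
  refine ⟨?_, Real.sSup_le hS (covNorm_nonneg W), covNorm_le (isCovering_matAbs hW)⟩
  rcases isEmpty_or_nonempty (∀ i, Fin (k i)) with _ | ⟨⟨a⟩⟩
  · rw [Matrix.trace, Finset.univ_eq_empty, Finset.sum_empty, norm_zero]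
    exact Real.sSup_nonneg fun r ⟨_, _, _, hr⟩ => hr ▸ norm_nonneg _
  · have (i : Fin m) : Nonempty (Fin (k i)) := ⟨a i⟩
    refine le_csSup ⟨_, hS⟩ ⟨fun _ => 1, fun _ => Matrix.isHermitian_one, fun _ => opNorm_one, ?_⟩
    rw [LqHV.tprod_one, mul_one]
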